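/- Restriction of HCS to a geodesic reduces to the hyperbolic Kuramoto equation: suppose x_i(t) = p·cosh(α_i(t)) + q·sinh(α_i(t)) with ⟨p,p⟩_M = -1, ⟨p,q⟩_M = 0, ⟨q,q⟩_M = 1 for smooth real functions α_i. Then ⟨x_i, x_j⟩_M = -cosh(α_i − α_j) and ⟨x_i, ẋ_j⟩_M = sinh(α_i − α_j)·α̇_j, and consequently cosh(α_i−α_j)·α̇_j − α̇_i + (sinh(α_i−α_j)/(1+cosh(α_i−α_j)))·α̇_j·sinh(α_j−α_i) = α̇_j − α̇_i. -/
import Mathlib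

open Real

/-- The Minkowski bilinear form on `ℝ^{d+1}`. -/
noncomputable def mink {d : ℕ} (x y : Fin (d + 1) → ℝ) : ℝ :=
  -(x 0 * y 0) + ∑ k : Fin d, x k.succ * y k.succ

lemma mink_expand {d : ℕ} (a b c e : ℝ) (p q : Fin (d + 1) → ℝ) :
    mink (a • p + b • q) (c • p + e • q) =
      a * c * mink p p + (a * e + b * c) * mink p q + b * e * mink q q := by
  have hs : ∑ k : Fin d, (a * p k.succ + b * q k.succ) * (c * p k.succ + e * q k.succ)
      = (∑ k : Fin d, a * c * (p k.succ * p k.succ)) +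
        (∑ k : Fin d, (a * e + b * c) * (p k.succ * q k.succ)) +
        (∑ k : Fin d, b * e * (q k.succ * q k.succ)) := by
    rw [← Finset.sum_add_distrib, ← Finset.sum_add_distrib]
    exact Finset.sum_congr rfl fun k _ => by ring
  simp only [mink, Pi.add_apply, Pi.smul_apply, smul_eq_mul]
  rw [hs, ← Finset.mul_sum, ← Finset.mul_sum, ← Finset.mul_sum]
  ring

/-- Restriction of the hyperboloid Cucker-Smale model to a common geodesic
`s ↦ cosh(s)·p + sinh(s)·q` reduces to the hyperbolic Kuramoto interaction. -/
theorem hcs_to_hk {d N : ℕ} (p q : Fin (d + 1) → ℝ)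
    (hpp : mink p p = -1) (hpq : mink p q = 0) (hqq : mink q q = 1)
    (α : Fin N → ℝ → ℝ) (hα : ∀ i, Differentiable ℝ (α i))
    (x : Fin N → ℝ → (Fin (d + 1) → ℝ))
    (hx : ∀ i t, x i t = Real.cosh (α i t) • p + Real.sinh (α i t) • q) :
    (∀ i j t, mink (x i t) (x j t) = -Real.cosh (α i t - α j t)) ∧
    (∀ i j t, mink (x i t) (deriv (x j) t) = Real.sinh (α i t - α j t) * deriv (α j) t) ∧
    (∀ i j t,
      Real.cosh (α i t - α j t) * deriv (α j) t - deriv (α i) t +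
        Real.sinh (α i t - α j t) / (1 + Real.cosh (α i t - α j t)) *
          deriv (α j) t * Real.sinh (α j t - α i t) =
      deriv (α j) t - deriv (α i) t) := by
  have hderiv : ∀ j t, deriv (x j) t =
      (Real.sinh (α j t) * deriv (α j) t) • p +
        (Real.cosh (α j t) * deriv (α j) t) • q := by
    intro j t
    have hαd : HasDerivAt (α j) (deriv (α j) t) t := (hα j t).hasDerivAt
    have h1 : HasDerivAt (fun s => Real.cosh (α j s)) (Real.sinh (α j t) * deriv (α j) t) t :=
      (Real.hasDerivAt_cosh (α j t)).comp t hαd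
    have h2 : HasDerivAt (fun s => Real.sinh (α j s)) (Real.cosh (α j t) * deriv (α j) t) t :=
      (Real.hasDerivAt_sinh (α j t)).comp t hαd
    have h3 : HasDerivAt (x j)
        ((Real.sinh (α j t) * deriv (α j) t) • p + (Real.cosh (α j t) * deriv (α j) t) • q) t := by
      have := (h1.smul_const p).add (h2.smul_const q)
      refine this.congr_of_eventuallyEq ?_
      filter_upwards with s using hx j s
    exact h3.deriv
  refine ⟨fun i j t => ?_, fun i j t => ?_, fun i j t => ?_⟩
  · rw [hx, hx, mink_expand, hpp, hpq, hqq, Real.cosh_sub]; ring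
  · rw [hx, hderiv, mink_expand, hpp, hpq, hqq, Real.sinh_sub]; ring
  · have h1 : (0:ℝ) < 1 + Real.cosh (α i t - α j t) := by positivity
    have h2 : Real.sinh (α j t - α i t) = -Real.sinh (α i t - α j t) := by
      rw [← Real.sinh_neg]; ring_nf
    rw [h2]
    have h3 := Real.cosh_sq_sub_sinh_sq (α i t - α j t)
    field_simp
    linear_combination deriv (α j) t * h3
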